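/- Let α be irrational with denominators (q_n) and F = 1_{[0,1/2)} − 1_{[1/2,1)}. If q_n is even and q_n·‖q_n α‖ < 1/2, then there is a measurable set I_n of Lebesgue measure ≤ q_n·‖q_n α‖ such that F^{(q_n)}(x) ∈ {−2, +2} for x ∈ I_n and F^{(q_n)}(x) = 0 for x ∉ I_n. -/

import Mathlib

open MeasureTheory

/-- The distance from a real number to the nearest integer. -/
noncomputable def distInt (x : ℝ) : ℝ := ⨅ m : ℤ, |x - m|

/-- The function `F = 1_{[0,1/2)} - 1_{[1/2,1)}` on the circle, as a 1-periodic
function on `ℝ`. -/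
noncomputable def Fhalf (x : ℝ) : ℝ := if Int.fract x < 1/2 then 1 else -1

/-
Write `q = 2m` and let `p / q` be the `n`-th convergent, so that `δ = qα - p` satisfies
`|δ| = ‖qα‖`, and `p` is odd because it is coprime to `q`. Then `mα ≡ 1/2 + δ/2 (mod 1)`, and
since `F` is antiperiodic with antiperiod `1/2`, the terms `j` and `m + j` of `F^{(q)}(x)` are
`F(y_j)` and `-F(y_j + δ/2)` with `y_j = x + jα`. Thus `F^{(q)}(x)` is a sum of `m` differences
`F(y_j) - F(y_j + δ/2) ∈ {0, ±2}`, each nonzero only when `2 y_j` lies within `|δ|` of an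
integer, which happens on a set of measure `|δ|` per period. Two nonzero differences `j ≠ j'`
would put `2(j - j')α` within `|δ|` of an integer; as `0 < |2(j - j')| < q` and `p / q` is
reduced, this forces `1 ≤ 2q|δ|`, contradicting `q‖qα‖ < 1/2`.
-/

open Set Function

theorem distInt_eq_abs_sub_round (x : ℝ) : distInt x = |x - round x| :=
  le_antisymm (ciInf_le ⟨0, by rintro _ ⟨m, rfl⟩; exact abs_nonneg _⟩ (round x))
    (le_ciInf (round_le x))

theorem distInt_nonneg (x : ℝ) : 0 ≤ distInt x :=
  (distInt_eq_abs_sub_round x).symm ▸ abs_nonneg _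

theorem distInt_eq_abs_sub_of_add_lt_one {x : ℝ} {m : ℤ} (h : |x - m| + distInt x < 1) :
    distInt x = |x - m| := by
  rw [distInt_eq_abs_sub_round] at h ⊢
  have hlt : |((m - round x : ℤ) : ℝ)| < 1 := by
    push_cast
    calc |(m : ℝ) - round x| ≤ |x - m| + |x - round x| := by
          rw [abs_sub_comm x]; exact abs_sub_le _ _ _
      _ < 1 := h
  rw [← Int.cast_abs, ← Int.cast_one, Int.cast_lt, Int.abs_lt_one_iff, sub_eq_zero] at hlt
  rw [hlt]

namespace GenContFract

open GenContFract (of)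

variable {K : Type*} [Field K] [LinearOrder K] [FloorRing K]

theorem exists_int_contsAux_eq (v : K) (k : ℕ) :
    ∃ a b : ℤ, (of v).contsAux k = ⟨a, b⟩ := by
  induction k using Nat.strong_induction_on with
  | _ k ih =>
    match k with
    | 0 => exact ⟨1, 0, by simp [contsAux]⟩
    | 1 => exact ⟨⌊v⌋, 1, by simp [first_contAux_eq_h_one, of_h_eq_floor]⟩
    | k + 2 =>
      obtain ⟨a, b, hk⟩ := ih k (by omega)
      obtain ⟨a', b', hk'⟩ := ih (k + 1) (by omega)
      cases hs : (of v).s.get? k with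
      | none => exact ⟨a', b', by simp [contsAux, hs, hk']⟩
      | some gp =>
        obtain ⟨ha, z, hz⟩ := of_partNum_eq_one_and_exists_int_partDen_eq hs
        refine ⟨z * a' + a, z * b' + b, ?_⟩
        rw [contsAux_recurrence hs hk hk']
        simp only [ha, hz, Pair.mk.injEq]
        push_cast
        constructor <;> ring

theorem exists_int_nums_dens_eq (v : K) (n : ℕ) :
    ∃ a b : ℤ, (of v).nums n = a ∧ (of v).dens n = b := by
  obtain ⟨a, b, h⟩ := exists_int_contsAux_eq v (n + 1)
  exact ⟨a, b, by rw [num_eq_conts_a, nth_cont_eq_succ_nth_contAux, h],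
    by rw [den_eq_conts_b, nth_cont_eq_succ_nth_contAux, h]⟩

theorem isCoprime_of_nums_eq_of_dens_eq {v : K} {n : ℕ} (hv : ¬(of v).TerminatedAt n)
    {a b : ℤ} (ha : (of v).nums n = a) (hb : (of v).dens n = b) : IsCoprime a b := by
  obtain ⟨a', b', ha', hb'⟩ := exists_int_nums_dens_eq v (n + 1)
  have hdet := SimpContFract.determinant (s := ⟨of v, of_isSimpContFract v⟩) hv
  change (of v).nums n * (of v).dens (n + 1) - (of v).dens n * (of v).nums (n + 1) = _ at hdet
  rw [ha, hb, ha', hb'] at hdet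
  have hdetZ : a * b' - b * a' = (-1) ^ (n + 1) := by exact_mod_cast hdet
  have hsq : ((-1 : ℤ) ^ (n + 1)) ^ 2 = 1 := by
    rw [← pow_mul]; exact Even.neg_one_pow ⟨n + 1, by ring⟩
  exact ⟨(-1) ^ (n + 1) * b', -((-1) ^ (n + 1) * a'),
    by linear_combination (-1) ^ (n + 1) * hdetZ + hsq⟩

variable [IsStrictOrderedRing K]

theorem one_le_of_den (v : K) (n : ℕ) : 1 ≤ (of v).dens n := by
  induction n with
  | zero => rw [zeroth_den_eq_one]
  | succ n ih => exact ih.trans of_den_mono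

theorem abs_dens_mul_sub_nums_le {v : K} {n : ℕ} (hv : ¬(of v).TerminatedAt n) :
    |(of v).dens n * v - (of v).nums n| ≤ 1 / (of v).dens n := by
  set B := (of v).dens n
  have hB : 0 < B := one_pos.trans_le (one_le_of_den v n)
  have hconv := abs_sub_convs_le hv
  rw [conv_eq_num_div_den] at hconv
  calc |B * v - (of v).nums n| = B * |v - (of v).nums n / B| := by
        rw [← abs_of_pos hB, ← abs_mul, abs_of_pos hB, mul_sub, mul_div_cancel₀ _ hB.ne']
    _ ≤ B * (1 / (B * (of v).dens (n + 1))) := by gcongr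
    _ = 1 / (of v).dens (n + 1) := by field_simp
    _ ≤ 1 / B := by gcongr; exact of_den_mono

theorem not_terminatedAt_of_irrational {α : ℝ} (hα : Irrational α) (n : ℕ) :
    ¬(of α).TerminatedAt n := fun h ↦
  let ⟨r, hr⟩ := (terminates_iff_rat α).mp ⟨n, h⟩
  hα ⟨r, hr.symm⟩

end GenContFract

theorem one_le_mul_abs_sub_add_mul_abs_sub (α : ℝ) {p q r s : ℤ} (hpq : IsCoprime p q)
    (hr : r ≠ 0) (hrq : |r| < q) : 1 ≤ q * |r * α - s| + |(r : ℝ)| * |q * α - p| := by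
  have hne : r * p - s * q ≠ 0 := fun h ↦
    have hqr : q ∣ r := hpq.symm.dvd_of_dvd_mul_right ⟨s, by linear_combination h⟩
    (Int.le_of_dvd (abs_pos.2 hr) ((dvd_abs _ _).2 hqr)).not_gt hrq
  have hq : (0 : ℝ) < q := by exact_mod_cast (abs_nonneg r).trans_lt hrq
  calc (1 : ℝ) ≤ |((r * p - s * q : ℤ) : ℝ)| := by
        rw [← Int.cast_abs]; exact_mod_cast Int.one_le_abs hne
    _ = |q * (r * α - s) - r * (q * α - p)| := by push_cast; ring_nf
    _ ≤ |q * (r * α - s)| + |r * (q * α - p)| := abs_sub _ _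
    _ = q * |r * α - s| + |(r : ℝ)| * |q * α - p| := by rw [abs_mul, abs_mul, abs_of_pos hq]

theorem Fhalf_eq_neg_one_zpow (y : ℝ) : Fhalf y = (-1) ^ ⌊2 * y⌋ := by
  have hsplit : 2 * y = 2 * Int.fract y + ((2 * ⌊y⌋ : ℤ) : ℝ) := by
    rw [Int.fract]; push_cast; ring
  rw [Fhalf, hsplit, Int.floor_add_intCast, zpow_add₀ (by norm_num),
    Even.neg_one_zpow ⟨⌊y⌋, two_mul _⟩, mul_one]
  have h0 := Int.fract_nonneg y
  have h1 := Int.fract_lt_one y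
  split_ifs with h
  · rw [Int.floor_eq_zero_iff.2 ⟨by positivity, by linarith⟩, zpow_zero]
  · rw [(Int.floor_eq_iff.2 ⟨by push_cast; linarith, by push_cast; linarith⟩ :
      ⌊2 * Int.fract y⌋ = 1), zpow_one]

theorem Fhalf_antiperiodic : Antiperiodic Fhalf (1 / 2) := fun y ↦ by
  rw [Fhalf_eq_neg_one_zpow, Fhalf_eq_neg_one_zpow, mul_add,
    show 2 * (1 / 2 : ℝ) = (1 : ℤ) by norm_num, Int.floor_add_intCast, zpow_add_one₀ (by norm_num),
    mul_neg_one]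

theorem Fhalf_periodic : Periodic Fhalf 1 := by
  simpa using Fhalf_antiperiodic.periodic

theorem Fhalf_antiperiodic_int_add_half (t : ℤ) : Antiperiodic Fhalf (t + 1 / 2) := by
  simpa using (Fhalf_periodic.int_mul t).add_antiperiod Fhalf_antiperiodic

theorem Fhalf_eq_one_or_eq_neg_one (y : ℝ) : Fhalf y = 1 ∨ Fhalf y = -1 := by
  unfold Fhalf; split_ifs <;> simp

theorem measurable_Fhalf : Measurable Fhalf :=
  Measurable.ite (measurableSet_lt measurable_fract measurable_const) measurable_const
    measurable_const

def jumpSet (β : ℝ) : Set ℝ := {y | Fhalf (y + β) ≠ Fhalf y}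

theorem measurableSet_jumpSet (β : ℝ) : MeasurableSet (jumpSet β) :=
  (measurableSet_eq_fun (measurable_Fhalf.comp (measurable_add_const β)) measurable_Fhalf).compl

theorem jumpSet_periodic (β : ℝ) : Periodic (· ∈ jumpSet β) 1 := fun y ↦ by
  change (Fhalf (y + 1 + β) ≠ Fhalf (y + 1)) = (Fhalf (y + β) ≠ Fhalf y)
  rw [add_right_comm, Fhalf_periodic, Fhalf_periodic]

theorem exists_int_abs_sub_le_of_floor_add_ne {a b : ℝ} (h : ⌊a + b⌋ ≠ ⌊a⌋) :
    ∃ k : ℤ, |2 * a + b - 2 * k| ≤ |b| := by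
  rcases le_total 0 b with hb | hb
  · have hlt : ⌊a⌋ < ⌊a + b⌋ := (Int.floor_mono (by linarith)).lt_of_ne' h
    refine ⟨⌊a + b⌋, abs_le.2 ⟨?_, ?_⟩⟩
    · linarith [Int.floor_le (a + b), abs_of_nonneg hb]
    · linarith [Int.floor_lt.1 hlt, abs_of_nonneg hb]
  · have hlt : ⌊a + b⌋ < ⌊a⌋ := (Int.floor_mono (by linarith)).lt_of_ne h
    refine ⟨⌊a⌋, abs_le.2 ⟨?_, ?_⟩⟩
    · linarith [Int.floor_le a, abs_of_nonpos hb]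
    · linarith [Int.floor_lt.1 hlt, abs_of_nonpos hb]

theorem exists_int_abs_sub_le_of_mem_jumpSet {β y : ℝ} (hy : y ∈ jumpSet β) :
    ∃ k : ℤ, |2 * y + β - k| ≤ |β| := by
  have hfloor : ⌊2 * y + 2 * β⌋ ≠ ⌊2 * y⌋ := fun h ↦
    hy (by rw [Fhalf_eq_neg_one_zpow, Fhalf_eq_neg_one_zpow, mul_add, h])
  obtain ⟨k, hk⟩ := exists_int_abs_sub_le_of_floor_add_ne hfloor
  refine ⟨k, ?_⟩
  have h2 : 2 * (2 * y) + 2 * β - 2 * k = 2 * (2 * y + β - k) := by ring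
  rw [h2, abs_mul, abs_mul, abs_two] at hk
  linarith

theorem volume_inter_Ico_eq_of_periodic {A : Set ℝ} {T : ℝ} (hT : 0 < T) (hA : MeasurableSet A)
    (hper : Periodic (· ∈ A) T) (a b : ℝ) :
    volume (A ∩ Ico a (a + T)) = volume (A ∩ Ico b (b + T)) := by
  rw [measure_congr ((ae_eq_refl A).inter Ico_ae_eq_Ioc),
    measure_congr ((ae_eq_refl A).inter Ico_ae_eq_Ioc)]
  refine (isAddFundamentalDomain_Ioc hT a).measure_set_eq (isAddFundamentalDomain_Ioc hT b) hA ?_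
  rintro ⟨_, n, rfl⟩
  ext x
  change n • T + x ∈ A ↔ x ∈ A
  rw [add_comm]
  exact (hper.zsmul n x).to_iff

theorem volume_jumpSet_inter_Ico_le {β : ℝ} (hβ : |β| < 1 / 4) (c : ℝ) :
    volume (jumpSet β ∩ Ico c (c + 1)) ≤ ENNReal.ofReal (2 * |β|) := by
  -- On the period `[-1/4, 3/4)` the jump set lies in two intervals of length `|β|`, around the
  -- discontinuities `0` and `1/2` of `Fhalf`.
  rw [volume_inter_Ico_eq_of_periodic one_pos (measurableSet_jumpSet β) (jumpSet_periodic β) c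
    (-1 / 4)]
  have hsub : jumpSet β ∩ Ico (-1 / 4) (-1 / 4 + 1) ⊆
      Icc ((-β - |β|) / 2) ((-β + |β|) / 2) ∪ Icc ((1 - β - |β|) / 2) ((1 - β + |β|) / 2) := by
    rintro y ⟨hy, hy0, hy1⟩
    obtain ⟨k, hk⟩ := exists_int_abs_sub_le_of_mem_jumpSet hy
    rw [abs_le] at hk
    have hk0 : (-1 : ℝ) < k := by linarith [abs_lt.1 hβ]
    have hk1 : (k : ℝ) < 2 := by linarith [abs_lt.1 hβ]
    obtain rfl | rfl : k = 0 ∨ k = 1 := by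
      have : -1 < k := by exact_mod_cast hk0
      have : k < 2 := by exact_mod_cast hk1
      omega
    · left; constructor <;> push_cast at hk <;> linarith
    · right; constructor <;> push_cast at hk <;> linarith
  calc volume (jumpSet β ∩ Ico (-1 / 4) (-1 / 4 + 1))
      ≤ volume (Icc ((-β - |β|) / 2) ((-β + |β|) / 2) ∪
          Icc ((1 - β - |β|) / 2) ((1 - β + |β|) / 2)) := measure_mono hsub
    _ ≤ volume (Icc ((-β - |β|) / 2) ((-β + |β|) / 2)) +
          volume (Icc ((1 - β - |β|) / 2) ((1 - β + |β|) / 2)) := measure_union_le _ _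
    _ = ENNReal.ofReal (2 * |β|) := by
      have := abs_nonneg β
      rw [Real.volume_Icc, Real.volume_Icc, ← ENNReal.ofReal_add (by linarith) (by linarith)]
      ring_nf

theorem volume_Ico_inter_preimage_jumpSet_le {β : ℝ} (hβ : |β| < 1 / 4) (c : ℝ) :
    volume (Ico 0 1 ∩ (· + c) ⁻¹' jumpSet β) ≤ ENNReal.ofReal (2 * |β|) := by
  have hpre : Ico 0 1 ∩ (· + c) ⁻¹' jumpSet β = (· + c) ⁻¹' (jumpSet β ∩ Ico c (c + 1)) := by
    ext x
    simp only [mem_inter_iff, mem_preimage, mem_Ico]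
    constructor
    · rintro ⟨⟨h0, h1⟩, hx⟩; exact ⟨hx, by linarith, by linarith⟩
    · rintro ⟨hx, h0, h1⟩; exact ⟨⟨by linarith, by linarith⟩, hx⟩
  rw [hpre, measure_preimage_add_right]
  exact volume_jumpSet_inter_Ico_le hβ c

theorem Function.Antiperiodic.sum_range_add_self {R : Type*} [AddCommGroup R] {f : ℝ → R}
    {c : ℝ} (hf : Antiperiodic f c) (x α : ℝ) (m : ℕ) :
    ∑ j ∈ Finset.range (m + m), f (x + j * α) =
      ∑ j ∈ Finset.range m, (f (x + j * α) - f (x + j * α + (m * α - c))) := by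
  rw [Finset.sum_range_add, Finset.sum_sub_distrib, sub_eq_add_neg, ← Finset.sum_neg_distrib]
  congr 1
  refine Finset.sum_congr rfl fun j _ ↦ ?_
  rw [← hf]
  congr 1
  push_cast
  ring

theorem sum_range_Fhalf_eq_sum_sub {α : ℝ} {p t : ℤ} {q m : ℕ} (hqm : q = m + m)
    (hpt : p = 2 * t + 1) (x : ℝ) :
    ∑ j ∈ Finset.range q, Fhalf (x + j * α) =
      ∑ j ∈ Finset.range m, (Fhalf (x + j * α) - Fhalf (x + j * α + (q * α - p) / 2)) := by
  have hβ : (m : ℝ) * α - (t + 1 / 2) = (q * α - p) / 2 := by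
    rw [hqm, hpt]; push_cast; ring
  rw [← hβ, hqm, (Fhalf_antiperiodic_int_add_half t).sum_range_add_self]

theorem eq_of_add_mul_mem_jumpSet {α : ℝ} {p : ℤ} {q m : ℕ} (hqm : q = m + m)
    (hpq : IsCoprime p q) (hsmall : q * |q * α - p| < 1 / 2) {x : ℝ} {i j : ℕ} (hi : i < m)
    (hj : j < m) (hxi : x + i * α ∈ jumpSet ((q * α - p) / 2))
    (hxj : x + j * α ∈ jumpSet ((q * α - p) / 2)) : i = j := by
  by_contra hne
  obtain ⟨k, hk⟩ := exists_int_abs_sub_le_of_mem_jumpSet hxi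
  obtain ⟨k', hk'⟩ := exists_int_abs_sub_le_of_mem_jumpSet hxj
  set δ := |q * α - p|
  set r : ℤ := 2 * ((i : ℤ) - j)
  have hrq : |r| < q := by rw [abs_lt]; omega
  have hrq' : |(r : ℝ)| ≤ q := by rw [← Int.cast_abs]; exact_mod_cast hrq.le
  have hclose : |r * α - (k - k' : ℤ)| ≤ δ := by
    calc |(r : ℝ) * α - (k - k' : ℤ)|
        = |(2 * (x + i * α) + (q * α - p) / 2 - k) - (2 * (x + j * α) + (q * α - p) / 2 - k')| := by
          congr 1; push_cast [r]; ring
      _ ≤ |(q * α - p) / 2| + |(q * α - p) / 2| := (abs_sub _ _).trans (add_le_add hk hk')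
      _ = δ := by rw [abs_div, abs_two]; ring
  have hsep := one_le_mul_abs_sub_add_mul_abs_sub α (q := q) hpq (by omega) hrq (s := k - k')
  push_cast at hsep
  have hcontra : (1 : ℝ) < 1 := calc
    1 ≤ q * |r * α - (k - k' : ℤ)| + |(r : ℝ)| * δ := by push_cast; exact hsep
    _ ≤ q * δ + q * δ := by gcongr
    _ < 1 := by linarith
  exact lt_irrefl _ hcontra

theorem Fhalf_sub_Fhalf_add_eq_zero {β y : ℝ} (hy : y ∉ jumpSet β) :
    Fhalf y - Fhalf (y + β) = 0 :=
  sub_eq_zero.2 (not_not.1 hy).symm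

theorem Fhalf_sub_Fhalf_add_eq_two_or_eq_neg_two {β y : ℝ} (hy : y ∈ jumpSet β) :
    Fhalf y - Fhalf (y + β) = 2 ∨ Fhalf y - Fhalf (y + β) = -2 := by
  rcases Fhalf_eq_one_or_eq_neg_one y with h | h <;>
    rcases Fhalf_eq_one_or_eq_neg_one (y + β) with h' | h' <;>
    simp_all [jumpSet] <;> norm_num

theorem sum_Fhalf_sub_Fhalf_add_eq_two_or_eq_neg_two {ι : Type*} {s : Finset ι} {y : ι → ℝ}
    {β : ℝ} {i : ι} (hi : i ∈ s) (hyi : y i ∈ jumpSet β)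
    (huniq : ∀ j ∈ s, y j ∈ jumpSet β → j = i) :
    ∑ j ∈ s, (Fhalf (y j) - Fhalf (y j + β)) = 2 ∨
      ∑ j ∈ s, (Fhalf (y j) - Fhalf (y j + β)) = -2 := by
  rw [Finset.sum_eq_single_of_mem i hi fun j hj hji ↦
    Fhalf_sub_Fhalf_add_eq_zero fun hyj ↦ hji (huniq j hj hyj)]
  exact Fhalf_sub_Fhalf_add_eq_two_or_eq_neg_two hyi

def exceptionalSet (α β : ℝ) (m : ℕ) : Set ℝ :=
  Ico 0 1 ∩ ⋃ j ∈ Finset.range m, (· + j * α) ⁻¹' jumpSet β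

theorem measurableSet_exceptionalSet (α β : ℝ) (m : ℕ) :
    MeasurableSet (exceptionalSet α β m) :=
  measurableSet_Ico.inter <| Finset.measurableSet_biUnion _ fun _ _ ↦
    measurable_add_const _ (measurableSet_jumpSet β)

theorem volume_exceptionalSet_le {β : ℝ} (hβ : |β| < 1 / 4) (α : ℝ) (m : ℕ) :
    volume (exceptionalSet α β m) ≤ ENNReal.ofReal (m * (2 * |β|)) := by
  rw [exceptionalSet, inter_iUnion₂]
  calc volume (⋃ j ∈ Finset.range m, Ico 0 1 ∩ (· + j * α) ⁻¹' jumpSet β)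
      ≤ ∑ j ∈ Finset.range m, volume (Ico 0 1 ∩ (· + j * α) ⁻¹' jumpSet β) :=
        measure_biUnion_finset_le _ _
    _ ≤ ∑ _j ∈ Finset.range m, ENNReal.ofReal (2 * |β|) :=
        Finset.sum_le_sum fun j _ ↦ volume_Ico_inter_preimage_jumpSet_le hβ _
    _ = ENNReal.ofReal (m * (2 * |β|)) := by
        rw [Finset.sum_const, Finset.card_range, nsmul_eq_mul, ← ENNReal.ofReal_natCast,
          ← ENNReal.ofReal_mul (by positivity)]

theorem exists_isCoprime_distInt_eq {α : ℝ} (hα : Irrational α) {n q : ℕ}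
    (hq : (q : ℝ) = (GenContFract.of α).dens n) (hq2 : 2 ≤ q) (hd : distInt (q * α) < 1 / 2) :
    ∃ p : ℤ, IsCoprime p q ∧ distInt (q * α) = |q * α - p| := by
  have hv := GenContFract.not_terminatedAt_of_irrational hα n
  obtain ⟨p, b, hp, hb⟩ := GenContFract.exists_int_nums_dens_eq α n
  have hbq : b = q := by exact_mod_cast hb.symm.trans hq.symm
  refine ⟨p, hbq ▸ GenContFract.isCoprime_of_nums_eq_of_dens_eq hv hp hb,
    distInt_eq_abs_sub_of_add_lt_one ?_⟩
  have happrox := GenContFract.abs_dens_mul_sub_nums_le hv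
  rw [← hq, hp] at happrox
  have : 1 / (q : ℝ) ≤ 1 / 2 := by gcongr; exact_mod_cast hq2
  linarith

/-- If `q_n` is an even denominator of the irrational `α` with `q_n ‖q_n α‖ < 1/2`,
then there is a measurable set `I_n` of measure at most `q_n ‖q_n α‖` such that the
Birkhoff sum `F^{(q_n)}` is `±2` on `I_n` and `0` off `I_n`. -/
theorem birkhoff_Fhalf_of_even (α : ℝ) (hα : Irrational α) (n q : ℕ)
    (hq : (q : ℝ) = (GenContFract.of α).dens n) (heven : Even q)
    (hsmall : (q : ℝ) * distInt ((q : ℝ) * α) < 1/2) :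
    ∃ I : Set ℝ, I ⊆ Set.Ico (0 : ℝ) 1 ∧ MeasurableSet I ∧
      volume I ≤ ENNReal.ofReal ((q : ℝ) * distInt ((q : ℝ) * α)) ∧
      ∀ x ∈ Set.Ico (0 : ℝ) 1,
        (x ∈ I → (∑ j ∈ Finset.range q, Fhalf (x + (j : ℝ) * α)) = 2 ∨
                 (∑ j ∈ Finset.range q, Fhalf (x + (j : ℝ) * α)) = -2) ∧
        (x ∉ I → (∑ j ∈ Finset.range q, Fhalf (x + (j : ℝ) * α)) = 0) := by
  obtain ⟨m, hqm⟩ := heven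
  have hq2 : 2 ≤ q := by
    have : (1 : ℝ) ≤ q := hq ▸ GenContFract.one_le_of_den α n
    have : 1 ≤ q := by exact_mod_cast this
    omega
  have hd : distInt (q * α) < 1 / 4 := by
    have : (2 : ℝ) ≤ q := by exact_mod_cast hq2
    nlinarith [distInt_nonneg (q * α)]
  obtain ⟨p, hpq, hdp⟩ := exists_isCoprime_distInt_eq hα hq hq2 (hd.trans (by norm_num))
  obtain ⟨t, hpt⟩ : Odd p := Int.isCoprime_two_right.1 <|
    hpq.of_isCoprime_of_dvd_right ⟨m, by rw [hqm]; push_cast; ring⟩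
  rw [hdp] at hsmall ⊢
  set β := (q * α - p) / 2
  have hβ : |β| < 1 / 4 := by rw [abs_div, abs_two]; linarith
  refine ⟨exceptionalSet α β m, inter_subset_left, measurableSet_exceptionalSet α β m,
    (volume_exceptionalSet_le hβ α m).trans (ENNReal.ofReal_le_ofReal ?_), fun x hx ↦ ⟨?_, ?_⟩⟩
  · rw [abs_div, abs_two, mul_div_cancel₀ _ two_ne_zero]
    gcongr
    exact_mod_cast (by omega : m ≤ q)
  · rintro ⟨-, hxI⟩
    obtain ⟨i, hi, hxi⟩ := mem_iUnion₂.1 hxI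
    rw [sum_range_Fhalf_eq_sum_sub hqm hpt]
    exact sum_Fhalf_sub_Fhalf_add_eq_two_or_eq_neg_two hi hxi fun j hj hxj ↦
      eq_of_add_mul_mem_jumpSet hqm hpq hsmall (Finset.mem_range.1 hj) (Finset.mem_range.1 hi)
        hxj hxi
  · intro hxI
    rw [sum_range_Fhalf_eq_sum_sub hqm hpt]
    exact Finset.sum_eq_zero fun j hj ↦ Fhalf_sub_Fhalf_add_eq_zero fun hxj ↦
      hxI ⟨hx, mem_iUnion₂.2 ⟨j, hj, hxj⟩⟩
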